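/- Let A be a topological *-algebra, σ a continuous submultiplicative seminorm on A, and D ≥ 0 a constant with σ(a*) ≤ D·σ(a) for all a ∈ A. Suppose that every p ∈ N(A) is bounded by some multiple of σ (for each p ∈ N(A) there is a constant C_p ≥ 0 with p(x) ≤ C_p·σ(x) for all x). Then every p ∈ N(A) satisfies the uniform bound p(a) ≤ √D·σ(a) for all a ∈ A; in particular, γ(x) := sup_{p ∈ N(A)} p(x) is finite for every x and γ is continuous on A. -/

import Mathlib

/-!
For `b = a⋆a` the C*-identity gives `p (b ^ 2 ^ n) = p a ^ (2 * 2 ^ n)`, while submultiplicativity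
of `σ` and `σ (a⋆) ≤ D σ a` give `σ (b ^ 2 ^ n) ≤ (√D σ a) ^ (2 * 2 ^ n)`. Hence
`p a ^ N ≤ C_p (√D σ a) ^ N` for arbitrarily large `N`, and the constant `C_p` disappears on taking
`N`-th roots. Consequently `N(A)` is bounded above by the continuous seminorm `√D • σ`, so its
supremum is a seminorm dominated by a continuous one, hence continuous.
-/

open Set Topology

/-- `p` is a continuous C*-seminorm on the topological `*`-algebra `A`:
it is submultiplicative, satisfies the C*-identity, and is continuous. -/
def IsContCstarSeminorm {A : Type*} [Ring A] [StarRing A] [Module ℂ A]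
    [TopologicalSpace A] (p : Seminorm ℂ A) : Prop :=
  Continuous p ∧ (∀ a b : A, p (a * b) ≤ p a * p b) ∧ ∀ a : A, p (star a * a) = p a ^ 2

variable {A : Type*}
  [Ring A] [Algebra ℂ A] [StarRing A] [StarModule ℂ A]
  [TopologicalSpace A] [IsTopologicalRing A] [ContinuousStar A] [ContinuousSMul ℂ A]

open Filter

theorem le_of_frequently_pow_le_mul_pow {x y C : ℝ} (hy : 0 ≤ y)
    (h : ∃ᶠ n in atTop, x ^ n ≤ C * y ^ n) : x ≤ y := by
  by_contra! hyx
  have hx : 0 < x := hy.trans_lt hyx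
  have hsmall : ∀ᶠ n in atTop, C * (y / x) ^ n < 1 := by
    have := (tendsto_pow_atTop_nhds_zero_of_lt_one (div_nonneg hy hx.le)
      ((div_lt_one hx).2 hyx)).const_mul C
    rw [mul_zero] at this
    exact this.eventually_lt_const one_pos
  obtain ⟨n, hn, hsmall_n⟩ := (h.and_eventually hsmall).exists
  have : C * y ^ n < x ^ n := by
    rwa [div_pow, ← mul_div_assoc, div_lt_one (pow_pos hx n)] at hsmall_n
  linarith

theorem IsSelfAdjoint.map_pow_two_pow {R : Type*} [Ring R] [StarRing R] {p : R → ℝ}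
    (hp : ∀ a, p (star a * a) = p a ^ 2) {b : R} (hb : IsSelfAdjoint b) (n : ℕ) :
    p (b ^ 2 ^ n) = p b ^ 2 ^ n := by
  induction n with
  | zero => simp
  | succ n ih =>
    calc p (b ^ 2 ^ (n + 1)) = p (star (b ^ 2 ^ n) * b ^ 2 ^ n) := by
          rw [(hb.pow _).star_eq, ← pow_add, ← two_mul, pow_succ']
      _ = p b ^ 2 ^ (n + 1) := by rw [hp, ih, ← pow_mul, pow_succ]

theorem le_sqrt_mul_of_cstar_identity {R : Type*} [Ring R] [StarRing R] {p : R → ℝ}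
    (hp : ∀ a, p (star a * a) = p a ^ 2) (σ : RingSeminorm R) {C D : ℝ} (hC : 0 ≤ C)
    (hpσ : ∀ x, p x ≤ C * σ x) (hD : 0 ≤ D) (hstar : ∀ a, σ (star a) ≤ D * σ a) (a : R) :
    p a ≤ √D * σ a := by
  refine le_of_frequently_pow_le_mul_pow (C := C) (by positivity) <| frequently_atTop.2 fun N =>
    ⟨2 * 2 ^ N, Nat.lt_two_pow_self.le.trans (Nat.le_mul_of_pos_left _ two_pos), ?_⟩
  have hσ : σ (star a * a) ≤ (√D * σ a) ^ 2 :=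
    calc σ (star a * a) ≤ σ (star a) * σ a := map_mul_le_mul σ _ _
      _ ≤ D * σ a * σ a := by gcongr; exact hstar a
      _ = (√D * σ a) ^ 2 := by rw [mul_pow, Real.sq_sqrt hD, sq, mul_assoc]
  calc p a ^ (2 * 2 ^ N) = p ((star a * a) ^ 2 ^ N) := by
        rw [pow_mul, ← hp, (IsSelfAdjoint.star_mul_self a).map_pow_two_pow hp]
    _ ≤ C * σ ((star a * a) ^ 2 ^ N) := hpσ _
    _ ≤ C * σ (star a * a) ^ 2 ^ N := by gcongr; exact map_pow_le_pow σ _ (by positivity)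
    _ ≤ C * (√D * σ a) ^ (2 * 2 ^ N) := by rw [pow_mul]; gcongr

def Seminorm.toRingSeminorm {𝕜 R : Type*} [SeminormedRing 𝕜] [Ring R] [Module 𝕜 R]
    (σ : Seminorm 𝕜 R) (hσ : ∀ a b, σ (a * b) ≤ σ a * σ b) : RingSeminorm R where
  toAddGroupSeminorm := σ.toAddGroupSeminorm
  mul_le' := hσ

theorem Seminorm.continuous_sSup_image_apply {𝕜 E : Type*} [NontriviallyNormedField 𝕜]
    [AddCommGroup E] [Module 𝕜 E] [TopologicalSpace E] [IsTopologicalAddGroup E]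
    {s : Set (Seminorm 𝕜 E)} {q : Seminorm 𝕜 E} (hq : Continuous q) (hsq : ∀ p ∈ s, p ≤ q) :
    Continuous fun x => sSup ((fun p : Seminorm 𝕜 E => p x) '' s) := by
  have hs : BddAbove s := ⟨q, hsq⟩
  have hsup : (fun x => sSup ((fun p : Seminorm 𝕜 E => p x) '' s)) = sSup s :=
    funext fun x => by rw [Seminorm.sSup_apply hs, sSup_image']
  rw [hsup]
  refine Seminorm.continuous_of_le hq ?_
  rcases s.eq_empty_or_nonempty with rfl | hne
  · rw [Seminorm.sSup_empty]; exact bot_le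
  · exact csSup_le hne hsq

/-- If `σ` is a continuous submultiplicative seminorm on `A` with `σ(a*) ≤ D·σ(a)`, and every
continuous C*-seminorm is bounded by some multiple of `σ`, then every continuous C*-seminorm
satisfies the uniform bound `p(a) ≤ √D·σ(a)`; in particular `γ(x) = sup_{p ∈ N(A)} p(x)` is
finite for every `x` and continuous on `A`. -/
theorem cstarSeminorms_uniformly_bounded (σ : Seminorm ℂ A) (hσc : Continuous σ)
    (hσsub : ∀ a b : A, σ (a * b) ≤ σ a * σ b)
    (D : ℝ) (hD : 0 ≤ D) (hstar : ∀ a : A, σ (star a) ≤ D * σ a)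
    (hbound : ∀ p : Seminorm ℂ A, IsContCstarSeminorm p →
      ∃ C : ℝ, 0 ≤ C ∧ ∀ x : A, p x ≤ C * σ x) :
    (∀ p : Seminorm ℂ A, IsContCstarSeminorm p → ∀ a : A, p a ≤ Real.sqrt D * σ a) ∧
      (∀ x : A, BddAbove {y : ℝ | ∃ p : Seminorm ℂ A, IsContCstarSeminorm p ∧ y = p x}) ∧
      Continuous fun x : A =>
        sSup {y : ℝ | ∃ p : Seminorm ℂ A, IsContCstarSeminorm p ∧ y = p x} := by
  set S := {p : Seminorm ℂ A | IsContCstarSeminorm p}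
  have hset (x : A) : {y : ℝ | ∃ p : Seminorm ℂ A, IsContCstarSeminorm p ∧ y = p x} =
      (fun p : Seminorm ℂ A => p x) '' S := by
    ext; simp [S, eq_comm]
  set c : NNReal := ⟨√D, Real.sqrt_nonneg D⟩
  have hle : ∀ p ∈ S, p ≤ c • σ := fun p hp a => by
    obtain ⟨C, hC, hpσ⟩ := hbound p hp
    exact le_sqrt_mul_of_cstar_identity hp.2.2 (σ.toRingSeminorm hσsub) hC hpσ hD hstar a
  refine ⟨hle, fun x => hset x ▸ ⟨_, forall_mem_image.2 fun p hp => hle p hp x⟩, ?_⟩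
  simp_rw [hset]
  exact Seminorm.continuous_sSup_image_apply (hσc.const_smul c) hle
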